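/- Let H be a torsion-free Hopf algebra over a PID R, and define H° = {f ∈ Hom_R(H,R) : f vanishes on some ideal I with H/I finitely generated over R}. Then every f ∈ H° vanishes on an ideal I with H/I free of finite rank, and H° is an R-subalgebra of Hom_R(H,R) closed under the convolution product, counit-unit, and antipode dual, i.e. H° is a Hopf R-algebra. -/

import Mathlib

open TensorProduct

variable (R : Type*) [CommRing R] [IsDomain R] [IsPrincipalIdealRing R]
variable (H : Type*) [Ring H] [HopfAlgebra R H]

/-- `f : H → R` vanishes on a two-sided ideal `I` of `H` such that `H/I` is a finitely
generated `R`-module. -/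
def VanishesOnCofg (f : H →ₗ[R] R) : Prop :=
  ∃ I : Submodule R H,
    (∀ x ∈ I, ∀ h : H, h * x ∈ I ∧ x * h ∈ I) ∧
    (∀ x ∈ I, f x = 0) ∧
    (∃ S : Finset H, ∀ h : H, ∃ i ∈ I, h - i ∈ Submodule.span R (S : Set H))

/-- `f : H → R` vanishes on a two-sided ideal `I` of `H` such that `H/I` is a free
`R`-module of finite rank (witnessed by elements whose classes form a basis of `H/I`). -/
def VanishesOnCofree (f : H →ₗ[R] R) : Prop :=
  ∃ I : Submodule R H,
    (∀ x ∈ I, ∀ h : H, h * x ∈ I ∧ x * h ∈ I) ∧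
    (∀ x ∈ I, f x = 0) ∧
    (∃ (m : ℕ) (b : Fin m → H), ∀ h : H, ∃! c : Fin m → R, h - ∑ j, c j • b j ∈ I)

/-- The convolution product `(f * g)(x) = ∑ f(x₁) g(x₂)` on `Hom_R(H, R)`. -/
noncomputable def convolution (f g : H →ₗ[R] R) : H →ₗ[R] R :=
  (TensorProduct.lid R R).toLinearMap ∘ₗ TensorProduct.map f g ∘ₗ
    Coalgebra.comul (R := R) (A := H)

/-!
Saturating a cofinite two-sided ideal `I` (adjoining every `x` with `a • x ∈ I` for some
nonzero `a`) keeps `f` vanishing on it and makes `H ⧸ I` torsion-free, hence free over the PID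
`R`. Then `f x = f̄ (x • 1̄)` is a matrix coefficient of the finite free `H`-module `H ⧸ I`, i.e.
`f = f' ∘ φ` for an algebra map `φ : H → A` into the finite free algebra `A = End_R (H ⧸ I)`;
conversely such an `f` vanishes on the two-sided ideal `ker φ`, which is cofinite because `R` is
noetherian. Matrix coefficients are closed under sums (`A × B`), convolution (`A ⊗ B` through the
comultiplication, an algebra map) and the antipode (`Aᵐᵒᵖ`, as `S` is an anti-homomorphism), and
`f (x * y) = ∑ⱼ f' (φ x * bⱼ) bⱼ* (φ y)` for a basis `bⱼ` of `A`.
-/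

universe u v w

namespace Submodule

variable {R : Type u} [CommRing R] {M : Type v} [AddCommGroup M] [Module R M]

theorem exists_finset_sub_mem_span_iff_finite_quotient (N : Submodule R M) :
    (∃ S : Finset M, ∀ x : M, ∃ i ∈ N, x - i ∈ span R (S : Set M)) ↔
      Module.Finite R (M ⧸ N) := by
  classical
  have sup_eq_top (S : Set M) : N ⊔ span R S = ⊤ ↔ ∀ x : M, ∃ i ∈ N, x - i ∈ span R S := by
    simp only [eq_top_iff', mem_sup]
    refine forall_congr' fun x => ⟨fun ⟨i, hi, s, hs, hx⟩ => ⟨i, hi, ?_⟩,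
      fun ⟨i, hi, hx⟩ => ⟨i, hi, x - i, hx, add_sub_cancel i x⟩⟩
    rwa [← hx, add_sub_cancel_left]
  rw [Module.finite_def]
  constructor
  · rintro ⟨S, hS⟩
    refine ⟨S.image N.mkQ, ?_⟩
    rw [Finset.coe_image, ← map_span, map_mkQ_eq_top, sup_eq_top]
    exact hS
  · rintro ⟨T, hT⟩
    have hT_sub : (T : Set (M ⧸ N)) ⊆ N.mkQ '' Set.univ := by
      simp [Set.image_univ_of_surjective N.mkQ_surjective]
    obtain ⟨S, -, rfl⟩ := Finset.subset_set_image_iff.mp hT_sub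
    rw [Finset.coe_image, ← map_span, map_mkQ_eq_top, sup_eq_top] at hT
    exact ⟨S, hT⟩

theorem exists_existsUnique_sub_sum_smul_mem [Nontrivial R] (N : Submodule R M)
    [Module.Finite R (M ⧸ N)] [Module.Free R (M ⧸ N)] :
    ∃ (m : ℕ) (b : Fin m → M), ∀ x : M, ∃! c : Fin m → R, x - ∑ j, c j • b j ∈ N := by
  let β := Module.finBasis R (M ⧸ N)
  refine ⟨_, fun j => (β j).out, fun x => ?_⟩
  have sub_mem_iff (c : Fin _ → R) :
      x - ∑ j, c j • (β j).out ∈ N ↔ β.equivFun.symm c = N.mkQ x := by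
    rw [← Quotient.mk_eq_zero, Quotient.mk_sub, sub_eq_zero, eq_comm, ← mkQ_apply, ← mkQ_apply,
      map_sum]
    simp [β.equivFun_symm_apply]
  exact (existsUnique_congr sub_mem_iff).2 (β.equivFun.symm.bijective.existsUnique _)

section Saturation

def saturation (N : Submodule R M) : Submodule R M :=
  LinearMap.ker ((torsion R (M ⧸ N)).mkQ ∘ₗ N.mkQ)

noncomputable def quotientSaturationEquiv (N : Submodule R M) :
    (M ⧸ N.saturation) ≃ₗ[R] (M ⧸ N) ⧸ torsion R (M ⧸ N) :=
  LinearMap.quotKerEquivOfSurjective _ ((torsion R _).mkQ_surjective.comp N.mkQ_surjective)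

variable {N : Submodule R M}

theorem mem_saturation {x : M} : x ∈ N.saturation ↔ ∃ a : nonZeroDivisors R, a • x ∈ N := by
  simp only [saturation, LinearMap.mem_ker, LinearMap.comp_apply, mkQ_apply,
    Quotient.mk_eq_zero, mem_torsion_iff, ← Quotient.mk_smul]

theorem saturation_le_ker {f : M →ₗ[R] R} (hf : N ≤ LinearMap.ker f) :
    N.saturation ≤ LinearMap.ker f := by
  intro x hx
  obtain ⟨a, hax⟩ := mem_saturation.1 hx
  have : (a : R) * f x = 0 := by simpa [Submonoid.smul_def] using hf hax
  exact (mul_left_mem_nonZeroDivisors_eq_zero_iff a.2).1 this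

instance [Module.Finite R (M ⧸ N)] : Module.Finite R (M ⧸ N.saturation) :=
  Module.Finite.equiv N.quotientSaturationEquiv.symm

instance [IsDomain R] : Module.IsTorsionFree R (M ⧸ N.saturation) :=
  N.quotientSaturationEquiv.injective.moduleIsTorsionFree _ (map_smul _)

end Saturation

end Submodule

section Ideals

variable {R : Type u} [CommRing R] {H : Type v} [Ring H] [Algebra R H]

def IsTwoSidedIdeal (I : Submodule R H) : Prop :=
  ∀ x ∈ I, ∀ h : H, h * x ∈ I ∧ x * h ∈ I

theorem IsTwoSidedIdeal.saturation {I : Submodule R H} (hI : IsTwoSidedIdeal I) :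
    IsTwoSidedIdeal I.saturation := by
  intro x hx h
  obtain ⟨a, hax⟩ := Submodule.mem_saturation.1 hx
  refine ⟨Submodule.mem_saturation.2 ⟨a, ?_⟩, Submodule.mem_saturation.2 ⟨a, ?_⟩⟩
  · rw [Submonoid.smul_def, ← mul_smul_comm]
    exact (hI _ hax h).1
  · rw [Submonoid.smul_def, ← smul_mul_assoc]
    exact (hI _ hax h).2

theorem isTwoSidedIdeal_ker {A : Type w} [Ring A] [Algebra R A] (φ : H →ₐ[R] A) :
    IsTwoSidedIdeal (LinearMap.ker φ.toLinearMap) := by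
  intro x hx h
  simp_all [LinearMap.mem_ker]

noncomputable def leftMulQuot (I : Submodule R H) (hI : ∀ x ∈ I, ∀ h : H, h * x ∈ I) :
    H →ₐ[R] Module.End R (H ⧸ I) :=
  AlgHom.ofLinearMap
    { toFun := fun x => I.mapQ I (LinearMap.mulLeft R x)
        (show I ≤ I.comap (LinearMap.mulLeft R x) from fun u hu => hI u hu x)
      map_add' := fun x y => I.linearMap_qext (by ext; simp [add_mul])
      map_smul' := fun r x => I.linearMap_qext (by ext; simp) }
    (I.linearMap_qext (by ext; simp))
    (fun x y => I.linearMap_qext (by ext; simp))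

theorem leftMulQuot_apply_mk (I : Submodule R H) (hI : ∀ x ∈ I, ∀ h : H, h * x ∈ I) (x u : H) :
    leftMulQuot I hI x (Submodule.Quotient.mk u) = Submodule.Quotient.mk (x * u) :=
  rfl

end Ideals

section MatrixCoeff

variable {R : Type u} [CommRing R] {H : Type v} [Ring H] [HopfAlgebra R H]

/-- `f = f' ∘ φ` is the matrix coefficient `x ↦ f' (φ x • 1)` of the `H`-module `A`. -/
def IsMatrixCoeff (f : H →ₗ[R] R) : Prop :=
  ∃ (A : Type v) (_ : Ring A) (_ : Algebra R A) (_ : Module.Finite R A) (_ : Module.Free R A)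
    (φ : H →ₐ[R] A) (f' : A →ₗ[R] R), f = f' ∘ₗ φ.toLinearMap

namespace IsMatrixCoeff

variable {f g : H →ₗ[R] R}

theorem add (hf : IsMatrixCoeff f) (hg : IsMatrixCoeff g) : IsMatrixCoeff (f + g) := by
  obtain ⟨A, _, _, _, _, φ, f', rfl⟩ := hf
  obtain ⟨B, _, _, _, _, ψ, g', rfl⟩ := hg
  exact ⟨A × B, _, _, inferInstance, inferInstance, φ.prod ψ, f'.coprod g', by ext; simp⟩

theorem smul (r : R) (hf : IsMatrixCoeff f) : IsMatrixCoeff (r • f) := by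
  obtain ⟨A, _, _, _, _, φ, f', rfl⟩ := hf
  exact ⟨A, _, _, inferInstance, inferInstance, φ, r • f', rfl⟩

theorem convolution (hf : IsMatrixCoeff f) (hg : IsMatrixCoeff g) :
    IsMatrixCoeff (_root_.convolution R H f g) := by
  obtain ⟨A, _, _, _, _, φ, f', rfl⟩ := hf
  obtain ⟨B, _, _, _, _, ψ, g', rfl⟩ := hg
  refine ⟨A ⊗[R] B, _, _, inferInstance, inferInstance,
    (Algebra.TensorProduct.map φ ψ).comp (Bialgebra.comulAlgHom R H),
    (TensorProduct.lid R R).toLinearMap ∘ₗ TensorProduct.map f' g', ?_⟩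
  simp [_root_.convolution, TensorProduct.map_comp, LinearMap.comp_assoc,
    TensorProduct.AlgebraTensorModule.map_eq]

theorem comp_antipode (hf : IsMatrixCoeff f) : IsMatrixCoeff (f ∘ₗ HopfAlgebra.antipode R) := by
  obtain ⟨A, _, _, _, _, φ, f', rfl⟩ := hf
  exact ⟨Aᵐᵒᵖ, _, _, inferInstance, inferInstance,
    (AlgHom.op φ).comp (HopfAlgebra.antipodeAlgHomOp R H),
    f' ∘ₗ (MulOpposite.opLinearEquiv R).symm.toLinearMap, by ext; simp⟩

theorem exists_mul_eq_sum [Nontrivial R] (hf : IsMatrixCoeff f) :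
    ∃ (m : ℕ) (g h : Fin m → (H →ₗ[R] R)),
      (∀ j, IsMatrixCoeff (g j)) ∧ (∀ j, IsMatrixCoeff (h j)) ∧
        ∀ x y : H, f (x * y) = ∑ j, g j x * h j y := by
  obtain ⟨A, _, _, _, _, φ, f', rfl⟩ := hf
  let b := Module.finBasis R A
  refine ⟨_, fun j => (f' ∘ₗ LinearMap.mulRight R (b j)) ∘ₗ φ.toLinearMap,
    fun j => b.coord j ∘ₗ φ.toLinearMap,
    fun j => ⟨A, _, _, inferInstance, inferInstance, φ, _, rfl⟩,
    fun j => ⟨A, _, _, inferInstance, inferInstance, φ, _, rfl⟩, fun x y => ?_⟩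
  simp only [LinearMap.comp_apply, AlgHom.toLinearMap_apply, map_mul]
  conv_lhs => rw [← b.sum_repr (φ y), Finset.mul_sum, map_sum]
  refine Finset.sum_congr rfl fun j _ => ?_
  simp [mul_comm]

end IsMatrixCoeff

end MatrixCoeff

section HopfDual

variable {R : Type u} [CommRing R] {H : Type v} [Ring H] [HopfAlgebra R H] {f : H →ₗ[R] R}

theorem vanishesOnCofg_iff_exists_finite_quotient :
    VanishesOnCofg R H f ↔ ∃ I : Submodule R H,
      IsTwoSidedIdeal I ∧ (∀ x ∈ I, f x = 0) ∧ Module.Finite R (H ⧸ I) := by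
  simp only [VanishesOnCofg, Submodule.exists_finset_sub_mem_span_iff_finite_quotient,
    IsTwoSidedIdeal]

theorem vanishesOnCofg_of_algHom [IsNoetherianRing R] {A : Type w} [Ring A] [Algebra R A]
    [Module.Finite R A] (φ : H →ₐ[R] A) (hf : ∀ x, φ x = 0 → f x = 0) : VanishesOnCofg R H f :=
  vanishesOnCofg_iff_exists_finite_quotient.2 ⟨_, isTwoSidedIdeal_ker φ, hf,
    Module.Finite.equiv φ.toLinearMap.quotKerEquivRange.symm⟩

variable [IsDomain R] [IsPrincipalIdealRing R]

theorem VanishesOnCofg.exists_free_quotient (hf : VanishesOnCofg R H f) :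
    ∃ I : Submodule R H, IsTwoSidedIdeal I ∧ (∀ x ∈ I, f x = 0) ∧
      Module.Finite R (H ⧸ I) ∧ Module.Free R (H ⧸ I) := by
  obtain ⟨I, hI, hfI, _⟩ := vanishesOnCofg_iff_exists_finite_quotient.1 hf
  exact ⟨I.saturation, hI.saturation, Submodule.saturation_le_ker hfI, inferInstance,
    inferInstance⟩

theorem VanishesOnCofg.vanishesOnCofree (hf : VanishesOnCofg R H f) : VanishesOnCofree R H f := by
  obtain ⟨I, hI, hfI, _, _⟩ := hf.exists_free_quotient
  exact ⟨I, hI, hfI, I.exists_existsUnique_sub_sum_smul_mem⟩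

theorem VanishesOnCofg.isMatrixCoeff (hf : VanishesOnCofg R H f) : IsMatrixCoeff f := by
  obtain ⟨I, hI, hfI, _, _⟩ := hf.exists_free_quotient
  refine ⟨Module.End R (H ⧸ I), _, _, inferInstance, inferInstance,
    leftMulQuot I fun x hx h => (hI x hx h).1,
    I.liftQ f (show I ≤ LinearMap.ker f from hfI) ∘ₗ LinearMap.applyₗ (Submodule.Quotient.mk 1), ?_⟩
  ext x
  simp [leftMulQuot_apply_mk]

theorem vanishesOnCofg_iff_isMatrixCoeff : VanishesOnCofg R H f ↔ IsMatrixCoeff f := by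
  refine ⟨VanishesOnCofg.isMatrixCoeff, fun ⟨A, _, _, _, _, φ, f', hf⟩ => ?_⟩
  exact vanishesOnCofg_of_algHom φ fun x hx => by simp [hf, hx]

end HopfDual

theorem hopf_dual_is_hopf_algebra :
    (∀ f : H →ₗ[R] R, VanishesOnCofg R H f → VanishesOnCofree R H f) ∧
    VanishesOnCofg R H 0 ∧
    (∀ f g : H →ₗ[R] R, VanishesOnCofg R H f → VanishesOnCofg R H g →
      VanishesOnCofg R H (f + g)) ∧
    (∀ (r : R) (f : H →ₗ[R] R), VanishesOnCofg R H f → VanishesOnCofg R H (r • f)) ∧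
    VanishesOnCofg R H (Coalgebra.counit (R := R) (A := H)) ∧
    (∀ f g : H →ₗ[R] R, VanishesOnCofg R H f → VanishesOnCofg R H g →
      VanishesOnCofg R H (convolution R H f g)) ∧
    (∀ f : H →ₗ[R] R, VanishesOnCofg R H f →
      VanishesOnCofg R H (f ∘ₗ HopfAlgebra.antipode (R := R) (A := H))) ∧
    (∀ f : H →ₗ[R] R, VanishesOnCofg R H f →
      ∃ (m : ℕ) (g h : Fin m → (H →ₗ[R] R)),
        (∀ j, VanishesOnCofg R H (g j)) ∧ (∀ j, VanishesOnCofg R H (h j)) ∧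
        ∀ x y : H, f (x * y) = ∑ j, g j x * h j y) := by
  have coeff {f : H →ₗ[R] R} := vanishesOnCofg_iff_isMatrixCoeff (f := f)
  refine ⟨fun f hf => hf.vanishesOnCofree,
    vanishesOnCofg_of_algHom (Bialgebra.counitAlgHom R H) fun _ _ => rfl,
    fun f g hf hg => coeff.2 ((coeff.1 hf).add (coeff.1 hg)),
    fun r f hf => coeff.2 ((coeff.1 hf).smul r),
    vanishesOnCofg_of_algHom (Bialgebra.counitAlgHom R H) fun _ => id,
    fun f g hf hg => coeff.2 ((coeff.1 hf).convolution (coeff.1 hg)),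
    fun f hf => coeff.2 (coeff.1 hf).comp_antipode, fun f hf => ?_⟩
  obtain ⟨m, g, h, hg, hh, hmul⟩ := (coeff.1 hf).exists_mul_eq_sum
  exact ⟨m, g, h, fun j => coeff.2 (hg j), fun j => coeff.2 (hh j), hmul⟩
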